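/- Let E and F be compact topological graphs locally conjugate via a homeomorphism τ : E^0 → F^0, and let (U_i)_{1≤i≤n} be an admissible open cover of E^0 with sheets U_{ik} (1 ≤ k ≤ m, m constant) and intertwining homeomorphisms γ_i : s_E^{-1}(U_i) → s_F^{-1}(τ(U_i)); set V_i = τ(U_i) and V_{ik} = γ_i(U_{ik}). Assume the permutation data of E and F agree: whenever U_i ∩ U_j ≠ ∅, for all k, l one has U_{ik} ∩ U_{jl} ≠ ∅ if and only if V_{ik} ∩ V_{jl} ≠ ∅. Then γ_i and γ_j agree on s_E^{-1}(U_i ∩ U_j) for all i, j, and hence γ = ⋃_{1≤i≤n} γ_i is a well-defined homeomorphism of E^1 onto F^1 satisfying s_F ∘ γ = τ ∘ s_E and r_F ∘ γ = τ ∘ r_E. -/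

import Mathlib

/-!
Fix `x` over `U_i ∩ U_j`, say `x ∈ U_{ik} ∩ U_{jl}`. Since `s_F (γ_j x) = τ (s_E x) ∈ V_i`,
the point `γ_j x` lies in some sheet `V_{ik'}` of `γ_i`, so `V_{ik'} ∩ V_{jl} ≠ ∅`. By the
agreement of the permutation data, `U_{ik'} ∩ U_{jl} ≠ ∅`, hence `k' = k` because the sheets of
`U_i` meet those of `U_j` according to a permutation. Thus `γ_j x = γ_i x'` with `x' ∈ U_{ik}`
and `s_E x' = s_E x`, and `s_E` is injective on `U_{ik}`, so `x' = x`.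

Once the `γ_i` are compatible they glue to a continuous map `γ : E¹ → F¹` over the open cover
`s_E⁻¹(U_i)`. It is injective because it intertwines `s_E` and `s_F` through the bijection `τ`,
so two points with the same image lie over the same `U_i`, where `γ = γ_i` is injective; it is
surjective because the `γ_i` map onto the sets `s_F⁻¹(V_i)`, which cover `F¹`. A continuous
bijection from a compact space to a Hausdorff space is a homeomorphism.
-/

/-- `f` maps `A ⊆ X` homeomorphically onto `B ⊆ Y`: there is a partial homeomorphism
with source `A` and target `B` agreeing with `f` on `A`. -/
def MapsHomeoOn {X Y : Type*} [TopologicalSpace X] [TopologicalSpace Y]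
    (f : X → Y) (A : Set X) (B : Set Y) : Prop :=
  ∃ e : PartialHomeomorph X Y, e.source = A ∧ e.target = B ∧ Set.EqOn f e A

open Set Function

namespace MapsHomeoOn

variable {X Y : Type*} [TopologicalSpace X] [TopologicalSpace Y] {f : X → Y} {A : Set X}
  {B : Set Y}

theorem injOn (hf : MapsHomeoOn f A B) : InjOn f A := by
  obtain ⟨e, rfl, -, hfe⟩ := hf
  exact e.injOn.congr hfe.symm

theorem continuousOn (hf : MapsHomeoOn f A B) : ContinuousOn f A := by
  obtain ⟨e, rfl, -, hfe⟩ := hf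
  exact e.continuousOn.congr hfe

theorem image_eq (hf : MapsHomeoOn f A B) : f '' A = B := by
  obtain ⟨e, rfl, rfl, hfe⟩ := hf
  rw [hfe.image_eq, e.image_source_eq_target]

end MapsHomeoOn

theorem exists_continuous_eqOn_of_isOpen_cover {ι X Y : Type*} [TopologicalSpace X]
    [TopologicalSpace Y] {A : ι → Set X} {f : ι → X → Y} (hA : ∀ i, IsOpen (A i))
    (hcov : ⋃ i, A i = univ) (hf : ∀ i, ContinuousOn (f i) (A i))
    (hcompat : ∀ i j, EqOn (f i) (f j) (A i ∩ A j)) :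
    ∃ g : X → Y, Continuous g ∧ ∀ i, EqOn g (f i) (A i) := by
  let g := liftCover A (fun i x => f i x) (fun i j _ hi hj => hcompat i j ⟨hi, hj⟩) hcov
  have hg : ∀ i, EqOn g (f i) (A i) := fun i _ hx => liftCover_of_mem hx
  refine ⟨g, continuous_of_cover_nhds (fun x => ?_) fun i => (hf i).congr (hg i), hg⟩
  obtain ⟨i, hi⟩ := mem_iUnion.1 (hcov ▸ mem_univ x)
  exact ⟨i, (hA i).mem_nhds hi⟩

theorem forall_of_eqOn_cover {ι X Y : Type*} {A : ι → Set X} (hcov : ⋃ i, A i = univ)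
    {f : ι → X → Y} {g : X → Y} (hg : ∀ i, EqOn g (f i) (A i)) (p : X → Y → Prop)
    (hp : ∀ i, ∀ x ∈ A i, p x (f i x)) (x : X) : p x (g x) := by
  obtain ⟨i, hi⟩ := mem_iUnion.1 (hcov ▸ mem_univ x)
  exact hg i hi ▸ hp i x hi

section LocalConjugacy

variable {ι κ E0 E1 F0 F1 : Type*} {sE : E1 → E0} {sF : F1 → F0} {τ : E0 → F0}

theorem eqOn_of_sheets_agree (hτ : Injective τ) {U V : Set E0} {A B : κ → Set E1}
    {f g : E1 → F1} (hA : sE ⁻¹' U = ⋃ k, A k) (hB : sE ⁻¹' V = ⋃ l, B l)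
    (hsA : ∀ k, InjOn sE (A k)) (hf_onto : sF ⁻¹' (τ '' U) ⊆ f '' (sE ⁻¹' U))
    (hf : ∀ x ∈ sE ⁻¹' U, sF (f x) = τ (sE x)) (hg : ∀ x ∈ sE ⁻¹' V, sF (g x) = τ (sE x))
    (π : κ ≃ κ) (hπ : ∀ k l, (A k ∩ B l).Nonempty ↔ l = π k)
    (hagree : ∀ k l, (f '' A k ∩ g '' B l).Nonempty → (A k ∩ B l).Nonempty) :
    EqOn f g (sE ⁻¹' (U ∩ V)) := by
  rintro x ⟨hxU, hxV⟩
  obtain ⟨k, hxk⟩ := mem_iUnion.1 (hA ▸ hxU : x ∈ ⋃ k, A k)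
  obtain ⟨l, hxl⟩ := mem_iUnion.1 (hB ▸ hxV : x ∈ ⋃ l, B l)
  have hgx : g x ∈ f '' ⋃ k, A k :=
    hA ▸ hf_onto (show sF (g x) ∈ τ '' U from hg x hxV ▸ mem_image_of_mem τ hxU)
  obtain ⟨k', x', hx'k', hfx'⟩ := mem_iUnion.1 (image_iUnion ▸ hgx)
  have hk' : k' = k := π.injective <|
    ((hπ k' l).1 (hagree k' l ⟨g x, ⟨x', hx'k', hfx'⟩, x, hxl, rfl⟩)).symm.trans
      ((hπ k l).1 ⟨x, hxk, hxl⟩)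
  subst hk'
  have hx'U : x' ∈ sE ⁻¹' U := hA ▸ mem_iUnion.2 ⟨k', hx'k'⟩
  have hsx' : sE x' = sE x := hτ (by rw [← hf x' hx'U, hfx', hg x hxV])
  rw [← hfx', hsA k' hx'k' hxk hsx']

theorem exists_homeomorph_eqOn_of_compatible [TopologicalSpace E1] [TopologicalSpace F1]
    [CompactSpace E1] [T2Space F1] (hτ : Bijective τ) {U : ι → Set E0}
    (hU : ⋃ i, U i = univ) {γ : ι → E1 → F1} (hopen : ∀ i, IsOpen (sE ⁻¹' U i))
    (hγ : ∀ i, MapsHomeoOn (γ i) (sE ⁻¹' U i) (sF ⁻¹' (τ '' U i)))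
    (hsγ : ∀ i, ∀ x ∈ sE ⁻¹' U i, sF (γ i x) = τ (sE x))
    (hcompat : ∀ i j, EqOn (γ i) (γ j) (sE ⁻¹' (U i ∩ U j))) :
    ∃ g : E1 ≃ₜ F1, ∀ i, EqOn g (γ i) (sE ⁻¹' U i) := by
  have hcov : ⋃ i, sE ⁻¹' U i = univ := by rw [← preimage_iUnion, hU, preimage_univ]
  obtain ⟨g, hg, hgγ⟩ := exists_continuous_eqOn_of_isOpen_cover hopen hcov
    (fun i => (hγ i).continuousOn) hcompat
  have hsg := forall_of_eqOn_cover hcov hgγ (fun x y => sF y = τ (sE x)) hsγ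
  have hinj : Injective g := by
    intro x y hxy
    have hsxy : sE x = sE y := hτ.1 (by rw [← hsg, ← hsg, hxy])
    obtain ⟨i, hi⟩ := mem_iUnion.1 (hU ▸ mem_univ (sE x))
    exact ((hγ i).injOn.congr (hgγ i).symm) hi (show sE y ∈ U i from hsxy ▸ hi) hxy
  have hsurj : Surjective g := by
    intro y
    obtain ⟨a, ha⟩ := hτ.2 (sF y)
    obtain ⟨i, hi⟩ := mem_iUnion.1 (hU ▸ mem_univ a)
    obtain ⟨x, hx, rfl⟩ : y ∈ γ i '' (sE ⁻¹' U i) := (hγ i).image_eq ▸ ⟨a, hi, ha⟩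
    exact ⟨x, hgγ i hx⟩
  exact ⟨Continuous.homeoOfEquivCompactToT2 (f := Equiv.ofBijective g ⟨hinj, hsurj⟩) hg, hgγ⟩

end LocalConjugacy

theorem glue_local_conjugacies_general
    {E0 E1 F0 F1 : Type*}
    [TopologicalSpace E0] [TopologicalSpace E1] [TopologicalSpace F0] [TopologicalSpace F1]
    [CompactSpace E1]
    [T2Space F1]
    (rE sE : E1 → E0) (hsE : IsLocalHomeomorph sE)
    (rF sF : F1 → F0)
    (τ : E0 ≃ₜ F0)
    (n m : ℕ) (U : Fin n → Set E0) (Ue : Fin n → Fin m → Set E1) (γ : Fin n → E1 → F1)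
    (hUo : ∀ i, IsOpen (U i)) (hUcov : (⋃ i, U i) = Set.univ)
    -- (C1)
    (hC1 : ∀ i, (∀ k, IsOpen (Ue i k)) ∧
      (∀ k l, k ≠ l → Disjoint (Ue i k) (Ue i l)) ∧
      sE ⁻¹' (U i) = ⋃ k, Ue i k ∧
      ∀ k, MapsHomeoOn sE (Ue i k) (U i))
    -- (C2)
    (hC2 : ∀ i, MapsHomeoOn (γ i) (sE ⁻¹' (U i)) (sF ⁻¹' (τ '' U i)) ∧
      ∀ x ∈ sE ⁻¹' (U i), sF (γ i x) = τ (sE x) ∧ rF (γ i x) = τ (rE x))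
    -- (C5)
    (hC5 : ∀ i j : Fin n, (U i ∩ U j).Nonempty →
      ∃ π : Fin m ≃ Fin m, ∀ k l, (Ue i k ∩ Ue j l).Nonempty ↔ l = π k)
    -- the permutation data of `E` and `F` agree
    (hagree : ∀ i j : Fin n, (U i ∩ U j).Nonempty → ∀ k l,
      ((Ue i k ∩ Ue j l).Nonempty ↔ ((γ i '' Ue i k) ∩ (γ j '' Ue j l)).Nonempty)) :
    (∀ i j : Fin n, Set.EqOn (γ i) (γ j) (sE ⁻¹' (U i ∩ U j))) ∧
    ∃ g : E1 ≃ₜ F1,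
      (∀ i, Set.EqOn (⇑g) (γ i) (sE ⁻¹' (U i))) ∧
      (∀ x, sF (g x) = τ (sE x)) ∧ (∀ x, rF (g x) = τ (rE x)) := by
  have hsγ i : ∀ x ∈ sE ⁻¹' U i, sF (γ i x) = τ (sE x) := fun x hx => ((hC2 i).2 x hx).1
  have hcompat i j : EqOn (γ i) (γ j) (sE ⁻¹' (U i ∩ U j)) := by
    rcases (U i ∩ U j).eq_empty_or_nonempty with h | h
    · simp [h]
    obtain ⟨π, hπ⟩ := hC5 i j h
    exact eqOn_of_sheets_agree τ.injective (hC1 i).2.2.1 (hC1 j).2.2.1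
      (fun k => ((hC1 i).2.2.2 k).injOn) (hC2 i).1.image_eq.superset (hsγ i) (hsγ j) π hπ
      (fun k l => (hagree i j h k l).2)
  obtain ⟨g, hgγ⟩ := exists_homeomorph_eqOn_of_compatible τ.bijective hUcov
    (fun i => (hUo i).preimage hsE.continuous) (fun i => (hC2 i).1) hsγ hcompat
  have hcov : ⋃ i, sE ⁻¹' U i = univ := by rw [← preimage_iUnion, hUcov, preimage_univ]
  exact ⟨hcompat, g, hgγ, forall_of_eqOn_cover hcov hgγ (fun x y => sF y = τ (sE x)) hsγ,
    forall_of_eqOn_cover hcov hgγ (fun x y => rF y = τ (rE x)) fun i x hx => ((hC2 i).2 x hx).2⟩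

/-- Let `E`, `F` be compact topological graphs locally conjugate via
`τ : E⁰ → F⁰`, and let `(U_i)_{1≤i≤n}` be an admissible open cover of `E⁰` (conditions
(C1)–(C6)) with sheets `U_{ik}` (`1 ≤ k ≤ m`, `m` constant) and intertwining
homeomorphisms `γ_i : s_E⁻¹(U_i) → s_F⁻¹(τ(U_i))`; set `V_i = τ(U_i)` and
`V_{ik} = γ_i(U_{ik})`.  Assume the permutation data of `E` and `F` agree: whenever
`U_i ∩ U_j ≠ ∅`, for all `k, l` one has `U_{ik} ∩ U_{jl} ≠ ∅ ↔ V_{ik} ∩ V_{jl} ≠ ∅`.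
Then `γ_i` and `γ_j` agree on `s_E⁻¹(U_i ∩ U_j)` for all `i, j`, and hence
`γ = ⋃ γ_i` is a well-defined homeomorphism of `E¹` onto `F¹` with
`s_F ∘ γ = τ ∘ s_E` and `r_F ∘ γ = τ ∘ r_E`. -/
theorem glue_local_conjugacies
    {E0 E1 F0 F1 : Type*}
    [TopologicalSpace E0] [TopologicalSpace E1] [TopologicalSpace F0] [TopologicalSpace F1]
    [CompactSpace E0] [CompactSpace E1] [CompactSpace F0] [CompactSpace F1]
    [T2Space E0] [T2Space E1] [T2Space F0] [T2Space F1]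
    (rE sE : E1 → E0) (hrE : Continuous rE) (hsE : IsLocalHomeomorph sE)
    (rF sF : F1 → F0) (hrF : Continuous rF) (hsF : IsLocalHomeomorph sF)
    (τ : E0 ≃ₜ F0)
    (n m : ℕ) (U : Fin n → Set E0) (Ue : Fin n → Fin m → Set E1) (γ : Fin n → E1 → F1)
    (hUo : ∀ i, IsOpen (U i)) (hUcov : (⋃ i, U i) = Set.univ)
    -- (C1)
    (hC1 : ∀ i, (∀ k, IsOpen (Ue i k)) ∧
      (∀ k l, k ≠ l → Disjoint (Ue i k) (Ue i l)) ∧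
      sE ⁻¹' (U i) = ⋃ k, Ue i k ∧
      ∀ k, MapsHomeoOn sE (Ue i k) (U i))
    -- (C2)
    (hC2 : ∀ i, MapsHomeoOn (γ i) (sE ⁻¹' (U i)) (sF ⁻¹' (τ '' U i)) ∧
      ∀ x ∈ sE ⁻¹' (U i), sF (γ i x) = τ (sE x) ∧ rF (γ i x) = τ (rE x))
    -- (C3)
    (hC3 : ∀ i j p : Fin n, i ≠ j → j ≠ p → i ≠ p → U i ∩ U j ∩ U p = ∅)
    -- (C4)
    (hC4 : ∀ i j : Fin n, i ≠ j → Disjoint (closure (U i) \ U j) (closure (U j) \ U i))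
    -- (C5)
    (hC5 : ∀ i j : Fin n, (U i ∩ U j).Nonempty →
      ∃ π : Fin m ≃ Fin m, ∀ k l, (Ue i k ∩ Ue j l).Nonempty ↔ l = π k)
    -- (C6)
    (hC6 : ∀ i j : Fin n, ((τ '' U i) ∩ (τ '' U j)).Nonempty →
      ∃ π : Fin m ≃ Fin m,
        ∀ k l, ((γ i '' Ue i k) ∩ (γ j '' Ue j l)).Nonempty ↔ l = π k)
    -- the permutation data of `E` and `F` agree
    (hagree : ∀ i j : Fin n, (U i ∩ U j).Nonempty → ∀ k l,
      ((Ue i k ∩ Ue j l).Nonempty ↔ ((γ i '' Ue i k) ∩ (γ j '' Ue j l)).Nonempty)) :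
    (∀ i j : Fin n, Set.EqOn (γ i) (γ j) (sE ⁻¹' (U i ∩ U j))) ∧
    ∃ g : E1 ≃ₜ F1,
      (∀ i, Set.EqOn (⇑g) (γ i) (sE ⁻¹' (U i))) ∧
      (∀ x, sF (g x) = τ (sE x)) ∧ (∀ x, rF (g x) = τ (rE x)) :=
  glue_local_conjugacies_general rE sE hsE rF sF τ n m U Ue γ hUo hUcov hC1 hC2 hC5 hagree
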